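/- arXiv:1312.5677 — 3 statements merged into one kernel-verified Lean document; each statement's English description precedes it below -/
import Mathlib

section
/- Let m ≥ 1 be a natural number and s_{2m} = 1/√(4m²+1). Then the function C_{2m}(x) = |T_{2m}(x)| + |x·T_{2m}'(x)| is monotonically increasing on the interval [0, s_{2m}]; in particular C_{2m}(x) ≥ C_{2m}(0) = 1 for all 0 ≤ x ≤ s_{2m}. -/
/-!
Put `x = sin ψ`. For `0 ≤ 2mψ ≤ π/2` the trigonometric forms of `T_{2m}` and
`T_{2m}' = 2m U_{2m-1}` give `C_{2m}(sin ψ) = cos (2mψ) + 2m tan ψ sin (2mψ)`, and the derivative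
in `ψ` of `cos (aψ) + a tan ψ sin (aψ)` is `a tan ψ (tan ψ sin (aψ) + a cos (aψ)) ≥ 0`. So `C_{2m}`
increases on `[0, sin (π/(4m))]`, which contains `[0, s_{2m}]` because
`s_{2m} < 1/(2m) ≤ sin (π/(4m))`.
-/

open Polynomial Real Set

namespace Polynomial.Chebyshev

theorem derivative_T_real_cos_mul_sin (n : ℤ) (θ : ℝ) :
    (derivative (T ℝ n)).eval (cos θ) * sin θ = n * sin (n * θ) := by
  rw [T_derivative_eq_U, eval_mul, eval_intCast, mul_assoc, U_real_cos]
  push_cast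
  ring_nf

theorem T_two_mul_real_sin (m : ℕ) (ψ : ℝ) :
    (T ℝ (2 * m)).eval (sin ψ) = (-1) ^ m * cos (2 * m * ψ) := by
  rw [← cos_pi_div_two_sub, T_real_cos, ← cos_nat_mul_pi_sub]
  push_cast
  ring_nf

theorem derivative_T_two_mul_real_sin_mul_cos (m : ℕ) (ψ : ℝ) :
    (derivative (T ℝ (2 * m))).eval (sin ψ) * cos ψ =
      -((-1) ^ m * (2 * m * sin (2 * m * ψ))) := by
  have h := derivative_T_real_cos_mul_sin (2 * m) (π / 2 - ψ)
  rw [cos_pi_div_two_sub, sin_pi_div_two_sub] at h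
  rw [h]
  push_cast
  rw [show 2 * (m : ℝ) * (π / 2 - ψ) = m * π - 2 * m * ψ by ring, sin_nat_mul_pi_sub]
  ring

end Polynomial.Chebyshev

theorem hasDerivAt_cos_mul_add_mul_tan_mul_sin_mul (a : ℝ) {ψ : ℝ} (hψ : cos ψ ≠ 0) :
    HasDerivAt (fun ψ => cos (a * ψ) + a * tan ψ * sin (a * ψ))
      (a * tan ψ * (tan ψ * sin (a * ψ) + a * cos (a * ψ))) ψ := by
  have hmul : HasDerivAt (fun ψ => a * ψ) a ψ := by simpa using (hasDerivAt_id ψ).const_mul a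
  refine (((hasDerivAt_cos (a * ψ)).comp ψ hmul).add
      (((hasDerivAt_tan hψ).const_mul a).mul
        ((hasDerivAt_sin (a * ψ)).comp ψ hmul))).congr_deriv ?_
  simp only [Function.comp_apply, tan_eq_sin_div_cos]
  field_simp
  linear_combination (-a * sin (a * ψ)) * sin_sq_add_cos_sq ψ

theorem monotoneOn_cos_mul_add_mul_tan_mul_sin_mul {a b : ℝ} (ha : 0 ≤ a) (hb : b < π / 2)
    (hab : a * b ≤ π / 2) :
    MonotoneOn (fun ψ => cos (a * ψ) + a * tan ψ * sin (a * ψ)) (Icc 0 b) := by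
  have hcos : ∀ ψ ∈ Icc 0 b, 0 < cos ψ := fun ψ hψ =>
    cos_pos_of_mem_Ioo ⟨by linarith [pi_pos, hψ.1], hψ.2.trans_lt hb⟩
  refine monotoneOn_of_hasDerivWithinAt_nonneg (convex_Icc 0 b)
    (fun ψ hψ => (hasDerivAt_cos_mul_add_mul_tan_mul_sin_mul a
      (hcos ψ hψ).ne').continuousAt.continuousWithinAt)
    (fun ψ hψ => (hasDerivAt_cos_mul_add_mul_tan_mul_sin_mul a
      (hcos ψ (interior_subset hψ)).ne').hasDerivWithinAt) fun ψ hψ => ?_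
  rw [interior_Icc] at hψ
  have haψ : a * ψ ≤ π / 2 := (mul_le_mul_of_nonneg_left hψ.2.le ha).trans hab
  have haψ₀ : 0 ≤ a * ψ := mul_nonneg ha hψ.1.le
  have htan : 0 ≤ tan ψ := tan_nonneg_of_nonneg_of_le_pi_div_two hψ.1.le (by linarith [hψ.2])
  have hsin : 0 ≤ sin (a * ψ) := sin_nonneg_of_nonneg_of_le_pi haψ₀ (by linarith [pi_pos])
  have hcos' : 0 ≤ cos (a * ψ) := cos_nonneg_of_mem_Icc ⟨by linarith [pi_pos], haψ⟩
  positivity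

theorem one_div_sqrt_four_mul_sq_add_one_le_sin {m : ℝ} (hm : 1 / 2 ≤ m) :
    1 / √(4 * m ^ 2 + 1) ≤ sin (π / (4 * m)) := by
  have hm₀ : 0 < m := by linarith
  have hsqrt : 2 * m ≤ √(4 * m ^ 2 + 1) := le_sqrt_of_sq_le (by nlinarith)
  calc 1 / √(4 * m ^ 2 + 1) ≤ 1 / (2 * m) := one_div_le_one_div_of_le (by positivity) hsqrt
    _ = 2 / π * (π / (4 * m)) := by field_simp; ring
    _ ≤ sin (π / (4 * m)) := mul_le_sin (by positivity) <|
      div_le_div_of_nonneg_left pi_pos.le (by norm_num) (by linarith)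

noncomputable def chebyshevC (n : ℤ) (x : ℝ) : ℝ :=
  |(Chebyshev.T ℝ n).eval x| + |x * (derivative (Chebyshev.T ℝ n)).eval x|

theorem chebyshevC_eval_zero_of_even {n : ℤ} (hn : Even n) : chebyshevC n 0 = 1 := by
  simp [chebyshevC, Chebyshev.T_eval_zero_of_even ℝ hn]

theorem chebyshevC_two_mul_sin {m : ℕ} {ψ : ℝ} (hψ₀ : 0 ≤ ψ) (hψ : ψ < π / 2)
    (hmψ : 2 * m * ψ ≤ π / 2) :
    chebyshevC (2 * m) (sin ψ) = cos (2 * m * ψ) + 2 * m * tan ψ * sin (2 * m * ψ) := by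
  have hcos : 0 < cos ψ := cos_pos_of_mem_Ioo ⟨by linarith [pi_pos], hψ⟩
  have hmψ₀ : 0 ≤ 2 * m * ψ := by positivity
  have hxT : sin ψ * (derivative (Chebyshev.T ℝ (2 * m))).eval (sin ψ) =
      -((-1) ^ m * (2 * m * tan ψ * sin (2 * m * ψ))) := by
    have h := Chebyshev.derivative_T_two_mul_real_sin_mul_cos m ψ
    rw [tan_eq_sin_div_cos]
    field_simp
    linear_combination sin ψ * h
  have hsin : 0 ≤ 2 * m * tan ψ * sin (2 * m * ψ) := mul_nonneg
    (mul_nonneg (by positivity) (tan_nonneg_of_nonneg_of_le_pi_div_two hψ₀ hψ.le))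
    (sin_nonneg_of_nonneg_of_le_pi hmψ₀ (by linarith [pi_pos]))
  have hcos' : 0 ≤ cos (2 * m * ψ) := cos_nonneg_of_mem_Icc ⟨by linarith [pi_pos], hmψ⟩
  rw [chebyshevC, Chebyshev.T_two_mul_real_sin, hxT, abs_neg, abs_mul, abs_mul, abs_pow, abs_neg,
    abs_one, one_pow, one_mul, one_mul, abs_of_nonneg hcos', abs_of_nonneg hsin]

theorem chebyshevC_two_mul_monotoneOn {m : ℕ} (hm : 1 ≤ m) :
    MonotoneOn (chebyshevC (2 * m)) (Icc 0 (sin (π / (4 * m)))) := by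
  set b := π / (4 * m)
  have hm' : (1 : ℝ) ≤ m := by exact_mod_cast hm
  have hb₀ : 0 ≤ b := by positivity
  have hb : b < π / 2 := div_lt_div_of_pos_left pi_pos (by norm_num) (by linarith)
  have hmb : 2 * m * b = π / 2 := by simp only [b]; field_simp; ring
  have hF := monotoneOn_cos_mul_add_mul_tan_mul_sin_mul (a := 2 * m) (by positivity) hb hmb.le
  have hmaps : MapsTo arcsin (Icc 0 (sin b)) (Icc 0 b) := fun x hx =>
    ⟨arcsin_nonneg.2 hx.1, (monotone_arcsin hx.2).trans_eq (arcsin_sin (by linarith) hb.le)⟩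
  refine (hF.comp (monotone_arcsin.monotoneOn _) hmaps).congr fun x hx => ?_
  obtain ⟨hψ₀, hψb⟩ := hmaps hx
  have hx1 : x ≤ 1 := hx.2.trans (sin_le_one b)
  rw [Function.comp_apply, ← chebyshevC_two_mul_sin hψ₀ (hψb.trans_lt hb)
    ((mul_le_mul_of_nonneg_left hψb (by positivity)).trans hmb.le),
    sin_arcsin (by linarith [hx.1]) hx1]

/-- For `m ≥ 1`, the function `C_{2m}(x) = |T_{2m}(x)| + |x·T_{2m}'(x)|` is
monotonically increasing on `[0, s_{2m}]`, where `s_{2m} = 1/√(4m²+1)`;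
in particular `C_{2m}(x) ≥ C_{2m}(0) = 1` on this interval. -/
theorem chebyshev_C_monotone_on_small_interval
    (m : ℕ) (hm : 1 ≤ m) :
    MonotoneOn
      (fun x : ℝ => |(Chebyshev.T ℝ (2 * m)).eval x| +
        |x * (derivative (Chebyshev.T ℝ (2 * m))).eval x|)
      (Set.Icc 0 (1 / Real.sqrt (4 * (m : ℝ) ^ 2 + 1))) ∧
    (|(Chebyshev.T ℝ (2 * m)).eval (0 : ℝ)| +
      |(0 : ℝ) * (derivative (Chebyshev.T ℝ (2 * m))).eval 0| = 1) ∧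
    ∀ x : ℝ, 0 ≤ x → x ≤ 1 / Real.sqrt (4 * (m : ℝ) ^ 2 + 1) →
      1 ≤ |(Chebyshev.T ℝ (2 * m)).eval x| +
        |x * (derivative (Chebyshev.T ℝ (2 * m))).eval x| := by
  have hm' : (1 : ℝ) ≤ m := by exact_mod_cast hm
  have hs := one_div_sqrt_four_mul_sq_add_one_le_sin (m := m) (by linarith)
  have hmono : MonotoneOn (chebyshevC (2 * m)) (Icc 0 (1 / √(4 * (m : ℝ) ^ 2 + 1))) :=
    (chebyshevC_two_mul_monotoneOn hm).mono (Icc_subset_Icc_right hs)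
  have hC₀ : chebyshevC (2 * m) 0 = 1 := chebyshevC_eval_zero_of_even (even_two_mul _)
  refine ⟨hmono, hC₀, fun x hx₀ hxs => ?_⟩
  exact hC₀ ▸ hmono ⟨le_rfl, hx₀.trans hxs⟩ ⟨hx₀, hxs⟩ hx₀
end

section
/- Let N ≥ 3 be an odd natural number, s_N = 1/√(N²+1), let x be real with |x| ≤ s_N, and let ε ≥ 0. Suppose the real sequence (e_n) satisfies e_0 = 0, e_1 = 0, and e_n = 2x·e_{n−1} − e_{n−2} + ξ_n for 2 ≤ n ≤ N, where each perturbation satisfies |ξ_n| ≤ ε·(2|x|·|T_{n−1}(x)| + |T_n(x)|). Then |e_N| ≤ ε · (5(N−1)(N+7)/8) · |x|. -/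
open Polynomial

lemma chebT_abs_le_one (n : ℤ) (x : ℝ) (hx : |x| ≤ 1) :
    |(Chebyshev.T ℝ n).eval x| ≤ 1 := by
  obtain ⟨h1, h2⟩ := abs_le.mp hx
  rw [← Real.cos_arccos h1 h2, Chebyshev.T_real_cos]
  exact Real.abs_cos_le_one _

lemma chebT_odd_abs_le (j : ℕ) (x : ℝ) (hx : |x| ≤ 1) :
    |(Chebyshev.T ℝ (2 * (j : ℤ) + 1)).eval x| ≤ (2 * (j : ℝ) + 1) * |x| := by
  induction j with
  | zero => simp [Chebyshev.T_one]
  | succ j ih =>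
    have h2 : (2 : ℤ) * (j + 1 : ℕ) + 1 = (2 * (j : ℤ) + 1) + 2 := by push_cast; ring
    rw [h2, Chebyshev.T_add_two]
    have hT := chebT_abs_le_one (2 * (j : ℤ) + 1 + 1) x hx
    simp only [eval_sub, eval_mul, eval_ofNat, eval_X]
    calc |2 * x * (Chebyshev.T ℝ (2 * (j:ℤ) + 1 + 1)).eval x - (Chebyshev.T ℝ (2 * (j:ℤ) + 1)).eval x|
        ≤ |2 * x * (Chebyshev.T ℝ (2 * (j:ℤ) + 1 + 1)).eval x| + |(Chebyshev.T ℝ (2 * (j:ℤ) + 1)).eval x| :=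
          abs_sub _ _
      _ ≤ 2 * |x| * 1 + (2 * (j:ℝ) + 1) * |x| := by
          rw [abs_mul, abs_mul]
          gcongr <;> simp [abs_of_nonneg]
      _ = (2 * ((j+1 : ℕ) : ℝ) + 1) * |x| := by push_cast; ring

set_option maxHeartbeats 2000000 in
/-- If `N ≥ 3` is odd, `|x| ≤ s_N = 1/√(N²+1)`, `e_0 = e_1 = 0`,
`e_n = 2x·e_{n−1} − e_{n−2} + ξ_n` for `2 ≤ n ≤ N`
with `|ξ_n| ≤ ε·(2|x|·|T_{n−1}(x)| + |T_n(x)|)`, then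
`|e_N| ≤ ε·(5(N−1)(N+7)/8)·|x|`. -/
theorem chebyshev_algI_error_bound_odd
    (N : ℕ) (hN : 3 ≤ N) (hNodd : Odd N) (x : ℝ)
    (hx : |x| ≤ 1 / Real.sqrt ((N : ℝ) ^ 2 + 1)) (ε : ℝ) (hε : 0 ≤ ε)
    (ξ e : ℕ → ℝ)
    (h0 : e 0 = 0) (h1 : e 1 = 0)
    (hrec : ∀ n, 2 ≤ n → n ≤ N → e n = 2 * x * e (n - 1) - e (n - 2) + ξ n)
    (hξ : ∀ n, 2 ≤ n → n ≤ N →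
      |ξ n| ≤ ε * (2 * |x| * |(Chebyshev.T ℝ (n - 1 : ℕ)).eval x| +
        |(Chebyshev.T ℝ n).eval x|)) :
    |e N| ≤ ε * (5 * (N - 1) * (N + 7) / 8) * |x| := by
  have ht0 : (0:ℝ) ≤ |x| := abs_nonneg x
  have hNpos : (0:ℝ) < (N:ℝ)^2 + 1 := by positivity
  have hsqrt1 : (1:ℝ) ≤ Real.sqrt ((N:ℝ)^2 + 1) := by
    nlinarith [Real.sq_sqrt hNpos.le, Real.sqrt_nonneg ((N:ℝ)^2+1),
      sq_nonneg ((N:ℝ))]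
  have ht1 : |x| ≤ 1 := hx.trans (by
    rw [div_le_one (by linarith)]; exact hsqrt1)
  set u : ℝ := 1 / ((N:ℝ)^2 + 1) with hu_def
  have hupos : 0 < u := by positivity
  have htu : |x|^2 ≤ u := by
    have h := pow_le_pow_left₀ ht0 hx 2
    rwa [div_pow, one_pow, Real.sq_sqrt hNpos.le] at h
  have hueq : u * ((N:ℝ)^2 + 1) = 1 := by
    rw [hu_def]; field_simp
  obtain ⟨M, hM⟩ := hNodd
  have hM1 : 1 ≤ M := by omega
  set t := |x| with ht_def
  have key : ∀ m : ℕ,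
      (2*m ≤ N → |e (2*m)| ≤ ε * ((m:ℝ) + u*(2*(m:ℝ)^3 + 5*(m:ℝ)^2))) ∧
      (2*m+1 ≤ N → |e (2*m+1)| ≤
        ε * ((m:ℝ)*(2*(m:ℝ)+5)
          + u*((m:ℝ)^2*((m:ℝ)+1)^2 + 4*(m:ℝ)^3 + 14*(m:ℝ))) * t) := by
    intro m
    induction m with
    | zero =>
      constructor
      · intro _
        rw [show 2*0 = 0 from rfl, h0]
        simp
      · intro _
        rw [show 2*0+1 = 1 from rfl, h1]
        simp
    | succ m ih =>
      obtain ⟨ihe, iho⟩ := ih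
      have hm0 : (0:ℝ) ≤ (m:ℝ) := Nat.cast_nonneg m
      have mcast : ((m+1 : ℕ) : ℝ) = (m:ℝ) + 1 := by push_cast; ring
      have heven : 2*(m+1) ≤ N → |e (2*(m+1))| ≤
          ε * (((m+1:ℕ):ℝ) + u*(2*((m+1:ℕ):ℝ)^3 + 5*((m+1:ℕ):ℝ)^2)) := by
        intro hle
        have hB := ihe (by omega)
        have hA := iho (by omega)
        have hidx : 2*(m+1) = 2*m+2 := by ring
        rw [hidx]
        have hrecn := hrec (2*m+2) (by omega) (by omega)
        have hs1 : 2*m+2-1 = 2*m+1 := by omega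
        have hs2 : 2*m+2-2 = 2*m := by omega
        rw [hs1, hs2] at hrecn
        have hξn := hξ (2*m+2) (by omega) (by omega)
        rw [hs1] at hξn
        have hT2 : |(Chebyshev.T ℝ ((2*m+2 : ℕ) : ℤ)).eval x| ≤ 1 :=
          chebT_abs_le_one _ x ht1
        have hT1 : |(Chebyshev.T ℝ ((2*m+1 : ℕ) : ℤ)).eval x| ≤ (2*(m:ℝ)+1) * t := by
          have hcast : ((2*m+1 : ℕ) : ℤ) = 2*(m:ℤ)+1 := by push_cast; ring
          rw [hcast]; exact chebT_odd_abs_le m x ht1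
        have hξb : |ξ (2*m+2)| ≤ ε * (2*(2*(m:ℝ)+1)*u + 1) := by
          refine hξn.trans ?_
          apply mul_le_mul_of_nonneg_left _ hε
          have h1' : 2 * t * |(Chebyshev.T ℝ ((2*m+1 : ℕ) : ℤ)).eval x|
              ≤ 2 * t * ((2*(m:ℝ)+1) * t) :=
            mul_le_mul_of_nonneg_left hT1 (by positivity)
          have h3' : 2*(2*(m:ℝ)+1)*t^2 ≤ 2*(2*(m:ℝ)+1)*u :=
            mul_le_mul_of_nonneg_left htu (by positivity)
          nlinarith [hT2]
        have hN0 : (0:ℝ) ≤ (N:ℝ) := Nat.cast_nonneg N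
        have h2m3 : ((2*m+3 : ℕ) : ℝ) ≤ (N:ℝ) := by
          exact_mod_cast Nat.cast_le.mpr (by omega : 2*m+3 ≤ N)
        have hu1 : u * (4*(m:ℝ)^2 + 12*(m:ℝ) + 10) ≤ 1 := by
          have hc : 4*(m:ℝ)^2 + 12*(m:ℝ) + 10 ≤ (N:ℝ)^2 + 1 := by
            push_cast at h2m3; nlinarith [h2m3, hm0, hN0]
          calc u * (4*(m:ℝ)^2 + 12*(m:ℝ) + 10) ≤ u * ((N:ℝ)^2+1) :=
                mul_le_mul_of_nonneg_left hc hupos.le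
            _ = 1 := hueq
        set P : ℝ := (m:ℝ)*(2*(m:ℝ)+5) + u*((m:ℝ)^2*((m:ℝ)+1)^2 + 4*(m:ℝ)^3 + 14*(m:ℝ)) with hP
        set Q : ℝ := (m:ℝ) + u*(2*(m:ℝ)^3 + 5*(m:ℝ)^2) with hQ
        have hPnn : 0 ≤ P := by rw [hP]; positivity
        have tri : |e (2*m+2)| ≤ 2*t*|e (2*m+1)| + |e (2*m)| + |ξ (2*m+2)| := by
          rw [hrecn]
          calc |2*x*e (2*m+1) - e (2*m) + ξ (2*m+2)|
              ≤ |2*x*e (2*m+1) - e (2*m)| + |ξ (2*m+2)| := abs_add_le _ _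
            _ ≤ |2*x*e (2*m+1)| + |e (2*m)| + |ξ (2*m+2)| := by
                have := abs_sub (2*x*e (2*m+1)) (e (2*m))
                linarith
            _ = 2*t*|e (2*m+1)| + |e (2*m)| + |ξ (2*m+2)| := by
                rw [abs_mul, abs_mul, abs_two, ht_def]
        have step1 : 2*t*|e (2*m+1)| ≤ 2*u*(ε*P) := by
          have h1' : 2*t*|e (2*m+1)| ≤ 2*t*(ε*P*t) :=
            mul_le_mul_of_nonneg_left hA (by positivity)
          have h2' : 2*t*(ε*P*t) = 2*(ε*P)*t^2 := by ring
          have h3' : 2*(ε*P)*t^2 ≤ 2*(ε*P)*u :=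
            mul_le_mul_of_nonneg_left htu (by positivity)
          linarith
        have total : |e (2*m+2)| ≤ ε*(2*u*P + Q + 2*(2*(m:ℝ)+1)*u + 1) := by
          have h4' : ε*(2*u*P + Q + 2*(2*(m:ℝ)+1)*u + 1)
              = 2*u*(ε*P) + ε*Q + ε*(2*(2*(m:ℝ)+1)*u + 1) := by ring
          linarith [tri, step1, hB, hξb]
        refine total.trans ?_
        apply mul_le_mul_of_nonneg_left _ hε
        rw [hP, hQ, mcast]
        have hkey : 2*u*((m:ℝ)^2*((m:ℝ)+1)^2 + 4*(m:ℝ)^3 + 14*(m:ℝ))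
            ≤ 2*(m:ℝ)^2 + 2*(m:ℝ) + 5 := by
          have hpoly : 2*((m:ℝ)^2*((m:ℝ)+1)^2 + 4*(m:ℝ)^3 + 14*(m:ℝ))
              ≤ (2*(m:ℝ)^2 + 2*(m:ℝ) + 5) * (4*(m:ℝ)^2 + 12*(m:ℝ) + 10) := by
            nlinarith [hm0, sq_nonneg ((m:ℝ)-1), sq_nonneg (m:ℝ),
              mul_nonneg (mul_nonneg hm0 hm0) hm0]
          have h1' := mul_le_mul_of_nonneg_left hpoly hupos.le
          have hsnn : (0:ℝ) ≤ 2*(m:ℝ)^2 + 2*(m:ℝ) + 5 := by positivity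
          have h2' := mul_le_mul_of_nonneg_left hu1 hsnn
          nlinarith [h1', h2']
        have h5' := mul_nonneg hupos.le (sub_nonneg.mpr hkey)
        nlinarith [h5']
      refine ⟨heven, ?_⟩
      intro hle
      have hB := heven (by omega)
      have hA := iho (by omega)
      have hidx : 2*(m+1)+1 = 2*m+3 := by ring
      rw [hidx]
      have hrecn := hrec (2*m+3) (by omega) (by omega)
      have hs1 : 2*m+3-1 = 2*m+2 := by omega
      have hs2 : 2*m+3-2 = 2*m+1 := by omega
      rw [hs1, hs2] at hrecn
      have hξn := hξ (2*m+3) (by omega) (by omega)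
      rw [hs1] at hξn
      have hT2 : |(Chebyshev.T ℝ ((2*m+2 : ℕ) : ℤ)).eval x| ≤ 1 :=
        chebT_abs_le_one _ x ht1
      have hT3 : |(Chebyshev.T ℝ ((2*m+3 : ℕ) : ℤ)).eval x| ≤ (2*(m:ℝ)+3) * t := by
        have hcast : ((2*m+3 : ℕ) : ℤ) = 2*((m+1:ℕ):ℤ)+1 := by push_cast; ring
        rw [hcast]
        have h := chebT_odd_abs_le (m+1) x ht1
        rw [mcast] at h
        calc |(Chebyshev.T ℝ (2*((m+1:ℕ):ℤ)+1)).eval x| ≤ (2*((m:ℝ)+1)+1) * t := h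
          _ = (2*(m:ℝ)+3) * t := by ring
      have hξb : |ξ (2*m+3)| ≤ ε * ((2*(m:ℝ)+5) * t) := by
        refine hξn.trans ?_
        apply mul_le_mul_of_nonneg_left _ hε
        have h1' : 2 * t * |(Chebyshev.T ℝ ((2*m+2 : ℕ) : ℤ)).eval x| ≤ 2 * t := by
          have := mul_le_mul_of_nonneg_left hT2 (by positivity : (0:ℝ) ≤ 2*t)
          linarith
        linarith [hT3]
      set P : ℝ := (m:ℝ)*(2*(m:ℝ)+5) + u*((m:ℝ)^2*((m:ℝ)+1)^2 + 4*(m:ℝ)^3 + 14*(m:ℝ)) with hP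
      set R : ℝ := ((m+1:ℕ):ℝ) + u*(2*((m+1:ℕ):ℝ)^3 + 5*((m+1:ℕ):ℝ)^2) with hR
      have hRnn : 0 ≤ R := by rw [hR]; positivity
      have tri : |e (2*m+3)| ≤ 2*t*|e (2*m+2)| + |e (2*m+1)| + |ξ (2*m+3)| := by
        rw [hrecn]
        calc |2*x*e (2*m+2) - e (2*m+1) + ξ (2*m+3)|
            ≤ |2*x*e (2*m+2) - e (2*m+1)| + |ξ (2*m+3)| := abs_add_le _ _
          _ ≤ |2*x*e (2*m+2)| + |e (2*m+1)| + |ξ (2*m+3)| := by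
              have := abs_sub (2*x*e (2*m+2)) (e (2*m+1))
              linarith
          _ = 2*t*|e (2*m+2)| + |e (2*m+1)| + |ξ (2*m+3)| := by
              rw [abs_mul, abs_mul, abs_two, ht_def]
      have step1 : 2*t*|e (2*m+2)| ≤ 2*(ε*R)*t :=
        calc 2*t*|e (2*m+2)| ≤ 2*t*(ε*R) :=
              mul_le_mul_of_nonneg_left hB (by positivity)
          _ = 2*(ε*R)*t := by ring
      have total : |e (2*m+3)| ≤ ε*(2*R + P + (2*(m:ℝ)+5))*t := by
        have h4' : ε*(2*R + P + (2*(m:ℝ)+5))*t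
            = 2*(ε*R)*t + ε*P*t + ε*((2*(m:ℝ)+5)*t) := by ring
        linarith [tri, step1, hA, hξb]
      refine total.trans ?_
      apply mul_le_mul_of_nonneg_right _ ht0
      apply mul_le_mul_of_nonneg_left _ hε
      rw [hP, hR, mcast]
      linarith [mul_nonneg hupos.le (sq_nonneg ((m:ℝ)-2))]
  have hfin := (key M).2 (by omega)
  have hNM : (N:ℝ) = 2*(M:ℝ)+1 := by
    rw [hM]; push_cast; ring
  have hMc : (1:ℝ) ≤ (M:ℝ) := by exact_mod_cast hM1
  have hNn : 2*M+1 = N := by omega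
  rw [hNn] at hfin
  refine hfin.trans ?_
  apply mul_le_mul_of_nonneg_right _ ht0
  apply mul_le_mul_of_nonneg_left _ hε
  rw [hNM]
  have hueq' : u * (4*(M:ℝ)^2 + 4*(M:ℝ) + 2) = 1 := by
    rw [← hueq, hNM]; ring
  have hpoly : 2*((M:ℝ)^2*((M:ℝ)+1)^2 + 4*(M:ℝ)^3 + 14*(M:ℝ))
      ≤ (M:ℝ)*((M:ℝ)+10)*(4*(M:ℝ)^2 + 4*(M:ℝ) + 2) := by
    nlinarith [hMc, sq_nonneg ((M:ℝ)-1), sq_nonneg (M:ℝ),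
      mul_nonneg (mul_nonneg (by linarith : (0:ℝ) ≤ (M:ℝ)) (by linarith : (0:ℝ) ≤ (M:ℝ))) (by linarith : (0:ℝ) ≤ (M:ℝ))]
  have hkey : u*((M:ℝ)^2*((M:ℝ)+1)^2 + 4*(M:ℝ)^3 + 14*(M:ℝ)) ≤ (M:ℝ)*((M:ℝ)+10)/2 := by
    have h1' := mul_le_mul_of_nonneg_left hpoly hupos.le
    have h2' : u * (4*(M:ℝ)^2 + 4*(M:ℝ) + 2) * ((M:ℝ)*((M:ℝ)+10)) = (M:ℝ)*((M:ℝ)+10) := by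
      rw [hueq']; ring
    nlinarith [h1', h2']
  linarith [hkey]
end

section
/- Let p ≥ 1 be a natural number, let x be real with |x| ≤ 1, and let ε ≥ 0. Suppose the real sequence (e_n) satisfies e_0 = 0 and e_n = 4·T_{2^{n−1}}(x)·e_{n−1} + ξ_n for 1 ≤ n ≤ p, where each perturbation satisfies |ξ_n| ≤ 3ε. Then |e_p| ≤ ε · 4^p, i.e. |e_p| ≤ ε·N² with N = 2^p. -/
open Polynomial

lemma abs_T_le_one (x : ℝ) (hx : |x| ≤ 1) (n : ℤ) :
    |(Chebyshev.T ℝ n).eval x| ≤ 1 := by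
  rw [abs_le] at hx
  have hcos : Real.cos (Real.arccos x) = x := Real.cos_arccos hx.1 hx.2
  rw [← hcos, Chebyshev.T_real_cos]
  exact Real.abs_cos_le_one _

/-- If `|x| ≤ 1`, `e_0 = 0`, `e_n = 4·T_{2^{n−1}}(x)·e_{n−1} + ξ_n` for
`1 ≤ n ≤ p` with `|ξ_n| ≤ 3ε`, then `|e_p| ≤ ε·4^p = ε·N²` with `N = 2^p`. -/
theorem chebyshev_algII_error_bound
    (p : ℕ) (hp : 1 ≤ p) (x : ℝ) (hx : |x| ≤ 1) (ε : ℝ) (hε : 0 ≤ ε)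
    (ξ e : ℕ → ℝ)
    (h0 : e 0 = 0)
    (hrec : ∀ n, 1 ≤ n → n ≤ p →
      e n = 4 * (Chebyshev.T ℝ (2 ^ (n - 1) : ℕ)).eval x * e (n - 1) + ξ n)
    (hξ : ∀ n, 1 ≤ n → n ≤ p → |ξ n| ≤ 3 * ε) :
    |e p| ≤ ε * 4 ^ p := by
  have key : ∀ n, n ≤ p → |e n| ≤ ε * (4 ^ n - 1) := by
    intro n
    induction n with
    | zero => intro _; simp [h0]
    | succ k ih =>
      intro hk
      have hk' : k ≤ p := Nat.le_of_succ_le hk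
      have ihk := ih hk'
      rw [hrec (k + 1) (Nat.le_add_left 1 k) hk]
      have hT := abs_T_le_one x hx (2 ^ ((k + 1) - 1) : ℕ)
      calc |4 * (Chebyshev.T ℝ (2 ^ ((k+1) - 1) : ℕ)).eval x * e ((k+1) - 1) + ξ (k+1)|
          ≤ |4 * (Chebyshev.T ℝ (2 ^ ((k+1) - 1) : ℕ)).eval x * e ((k+1) - 1)| + |ξ (k+1)| :=
            abs_add_le _ _
        _ ≤ 4 * |e k| + 3 * ε := by
            refine add_le_add ?_ (hξ (k+1) (Nat.le_add_left 1 k) hk)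
            rw [abs_mul, abs_mul, abs_of_nonneg (by norm_num : (0:ℝ) ≤ 4)]
            simp only [Nat.add_sub_cancel] at hT ⊢
            nlinarith [abs_nonneg (e k)]
        _ ≤ 4 * (ε * (4 ^ k - 1)) + 3 * ε := by nlinarith
        _ = ε * (4 ^ (k+1) - 1) := by ring
  calc |e p| ≤ ε * (4 ^ p - 1) := key p le_rfl
    _ ≤ ε * 4 ^ p := by nlinarith [pow_pos (by norm_num : (0:ℝ) < 4) p]
end
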